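/- Fix an integer K ≥ 1, the time grid t_j := 1 − j/K, and an unmasking policy g assigning to each z ∈ Z with a masked position and each step j a probability distribution g(· | z, t_j) on the masked positions of z. For a fixed clean sequence x ∈ V^L, run the teacher-forced chain conditioned on x0 = x: initialize at the fully masked sequence and at each step j sample I ~ g(· | z, t_j) and replace position I of the current state z by x^I. Then for every step j there exists a function α_j : Z → [0,∞), not depending on x, such that for all x ∈ V^L and all z ∈ Z, the probability that the chain conditioned on x0 = x is in state z at step j equals α_j(z) · 1{x agrees with z}. -/
import Mathlib


open Finset

/-- Partially masked sequences of length `L`: `none` plays the role of the mask symbol `m`. -/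
abbrev MSeq (V : Type*) (L : ℕ) := Fin L → Option V

/-- Clean sequences of length `L`. -/
abbrev CSeq (V : Type*) (L : ℕ) := Fin L → V

/-- `x` agrees with `z` on the unmasked positions of `z`. -/
def agrees {V : Type*} {L : ℕ} (x : CSeq V L) (z : MSeq V L) : Prop :=
  ∀ i, z i = none ∨ z i = some (x i)

instance {V : Type*} [DecidableEq V] {L : ℕ} (x : CSeq V L) (z : MSeq V L) :
    Decidable (agrees x z) :=
  inferInstanceAs (Decidable (∀ i, z i = none ∨ z i = some (x i)))

/-- One-step transition kernel of the teacher-forced chain conditioned on the clean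
sequence `x`: sample a masked index `i ~ g(·|z)` and replace position `i` of `z` by
`x i`; a fully unmasked state stays put. -/
noncomputable def tfKernel {V : Type*} [Fintype V] [DecidableEq V] {L : ℕ}
    (g : MSeq V L → Fin L → ℝ) (x : CSeq V L) (z z' : MSeq V L) : ℝ :=
  if ∃ i, z i = none then
    ∑ i : Fin L, (if z i = none ∧ z' = Function.update z i (some (x i)) then g z i else 0)
  else if z' = z then 1 else 0

/-- Law at step `j` of the teacher-forced chain conditioned on `x0 = x`, started at the
fully masked sequence. -/
noncomputable def tfChain {V : Type*} [Fintype V] [DecidableEq V] {L : ℕ}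
    (g : MSeq V L → ℝ → Fin L → ℝ) (tg : ℕ → ℝ) (x : CSeq V L) : ℕ → MSeq V L → ℝ
  | 0 => fun z => if z = (fun _ => none) then 1 else 0
  | j + 1 => fun z' => ∑ z : MSeq V L,
      tfChain g tg x j z * tfKernel (fun z'' => g z'' (tg j)) x z z'

/-- `x`-independent transition weight. -/
noncomputable def wKer {V : Type*} [Fintype V] [DecidableEq V] {L : ℕ}
    (g : MSeq V L → Fin L → ℝ) (z z' : MSeq V L) : ℝ :=
  if ∃ i, z i = none then
    ∑ i : Fin L, (if z i = none ∧ z' = Function.update z i (z' i) ∧ z' i ≠ none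
      then g z i else 0)
  else if z' = z then 1 else 0

lemma agrees_update {V : Type*} {L : ℕ} [DecidableEq V] {x : CSeq V L} {z : MSeq V L}
    (h : agrees x z) (i : Fin L) : agrees x (Function.update z i (some (x i))) := by
  intro k
  rcases eq_or_ne k i with rfl | hk
  · right; simp
  · simpa [Function.update_of_ne hk] using h k

lemma tfKernel_key {V : Type*} [Fintype V] [DecidableEq V] {L : ℕ}
    (g : MSeq V L → Fin L → ℝ) (x : CSeq V L) (z z' : MSeq V L) :
    (if agrees x z then (1:ℝ) else 0) * tfKernel g x z z'
      = wKer g z z' * (if agrees x z' then (1:ℝ) else 0) := by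
  unfold tfKernel wKer
  by_cases hz : agrees x z
  · by_cases hz' : agrees x z'
    · simp only [hz, hz', if_true, mul_one, one_mul]
      by_cases hm : ∃ i, z i = none
      · simp only [hm, if_true]
        refine Finset.sum_congr rfl fun i _ => ?_
        congr 1
        apply propext
        constructor
        · rintro ⟨h1, rfl⟩
          refine ⟨h1, ?_, ?_⟩ <;> simp
        · rintro ⟨h1, h2, h3⟩
          refine ⟨h1, ?_⟩
          rcases hz' i with h | h
          · exact absurd h h3
          · rw [h2, h]
      · simp [hm]
    · simp only [hz', if_false, mul_zero, hz, if_true, one_mul]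
      by_cases hm : ∃ i, z i = none
      · simp only [hm, if_true]
        refine Finset.sum_eq_zero fun i _ => ?_
        rw [if_neg]
        rintro ⟨h1, rfl⟩
        exact hz' (agrees_update hz i)
      · simp only [hm, if_false]
        rw [if_neg]
        rintro rfl; exact hz' hz
  · simp only [hz, if_false, zero_mul]
    by_cases hz' : agrees x z'
    · simp only [hz', if_true, mul_one]
      by_cases hm : ∃ i, z i = none
      · simp only [hm, if_true]
        symm
        refine Finset.sum_eq_zero fun i _ => ?_
        rw [if_neg]
        rintro ⟨h1, h2, h3⟩
        apply hz
        intro k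
        rcases eq_or_ne k i with rfl | hk
        · exact Or.inl h1
        · have : z k = z' k := by rw [h2, Function.update_of_ne hk]
          rw [this]; exact hz' k
      · simp only [hm, if_false]
        symm; rw [if_neg]
        rintro rfl; exact hz hz'
    · simp [hz']

/-- For every step `j` of the teacher-forced chain conditioned on
`x0 = x`, there is a nonnegative function `α_j : Z → [0,∞)`, not depending on `x`, such
that the probability of being in state `z` at step `j` equals
`α_j(z) · 1{x agrees with z}`. -/
theorem tfChain_nonleaky
    {V : Type*} [Fintype V] [DecidableEq V] [Nonempty V] {L K : ℕ}
    (hL : 0 < L) (hK : 1 ≤ K)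
    (g : MSeq V L → ℝ → Fin L → ℝ)
    (hg : ∀ z : MSeq V L, (∃ i, z i = none) → ∀ j : ℕ, j ≤ K →
      (∀ i, 0 ≤ g z (1 - (j : ℝ) / (K : ℝ)) i) ∧
      (∀ i, z i ≠ none → g z (1 - (j : ℝ) / (K : ℝ)) i = 0) ∧
      (∑ i : Fin L, g z (1 - (j : ℝ) / (K : ℝ)) i) = 1) :
    ∀ j : ℕ, j ≤ K → ∃ α : MSeq V L → ℝ, (∀ z, 0 ≤ α z) ∧
      ∀ (x : CSeq V L) (z : MSeq V L),
        tfChain g (fun j' => 1 - (j' : ℝ) / (K : ℝ)) x j z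
          = α z * (if agrees x z then 1 else 0) := by
  intro j
  induction j with
  | zero =>
    intro _
    refine ⟨fun z => if z = (fun _ => none) then 1 else 0, ?_, ?_⟩
    · intro z; dsimp only; split <;> norm_num
    · intro x z
      simp only [tfChain]
      by_cases h : z = fun _ => none
      · subst h
        have hag : agrees x (fun _ => none) := fun i => Or.inl rfl
        simp [hag]
      · simp [h]
  | succ j ih =>
    intro hj
    have hjK : j ≤ K := Nat.le_of_succ_le hj
    obtain ⟨α, hα0, hα⟩ := ih hjK
    refine ⟨fun z' => ∑ z : MSeq V L,
      α z * wKer (fun z'' => g z'' (1 - (j : ℝ) / (K : ℝ))) z z', ?_, ?_⟩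
    · intro z'
      refine Finset.sum_nonneg fun z _ => mul_nonneg (hα0 z) ?_
      unfold wKer
      by_cases hm : ∃ i, z i = none
      · simp only [hm, if_true]
        refine Finset.sum_nonneg fun i _ => ?_
        split
        · exact (hg z hm j hjK).1 i
        · exact le_rfl
      · rw [if_neg hm]; split <;> norm_num
    · intro x z'
      show (∑ z : MSeq V L, tfChain g (fun j' => 1 - (j' : ℝ) / (K : ℝ)) x j z *
          tfKernel (fun z'' => g z'' (1 - (j : ℝ) / (K : ℝ))) x z z') = _
      rw [Finset.sum_mul]
      refine Finset.sum_congr rfl fun z _ => ?_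
      rw [hα x z, mul_assoc, tfKernel_key, ← mul_assoc, mul_assoc]
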